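/- Let 0 < q < 1 and a, b ∈ ℂ. Define polynomials h_n ∈ ℂ[x] by h_0 = 1, h_1 = 2x, and 2x·h_n = h_{n+1} + (1−q^n)·h_{n−1} for n ≥ 1 (the continuous q-Hermite polynomials p_n(x;0,0,0,0|q)); and define Q_n ∈ ℂ[x] by Q_0 = 1, Q_1 = 2x − (a+b), and 2x·Q_n = Q_{n+1} + q^n·(a+b)·Q_n + (1−q^n)(1−q^{n−1}·ab)·Q_{n−1} for n ≥ 1 (the Al-Salam–Chihara polynomials p_n(x;a,b,0,0|q)). Then for every n ≥ 0: h_n = Σ_{k=0}^{n} c_{n,k}·Q_k, where c_{n,k} = Σ_{ℓ=k}^{n} binom_q(n,ℓ)·binom_q(ℓ,k)·a^{n−ℓ}·b^{ℓ−k}. -/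

import Mathlib

noncomputable section

open scoped BigOperators

/-- The Gaussian (q-)binomial coefficient, characterized by
`qBinom q n 0 = 1`, `qBinom q 0 (k+1) = 0` and the Pascal-type rule
`qBinom q (n+1) (k+1) = q^(k+1) * qBinom q n (k+1) + qBinom q n k`. -/
def qBinom (q : ℂ) : ℕ → ℕ → ℂ
  | _, 0 => 1
  | 0, _ + 1 => 0
  | n + 1, k + 1 => q ^ (k + 1) * qBinom q n (k + 1) + qBinom q n k

/-- The continuous q-Hermite polynomials `h_n = p_n(x;0,0,0,0|q)`:
`h_0 = 1`, `h_1 = 2x`, and `2x·h_n = h_{n+1} + (1-q^n)·h_{n-1}` for `n ≥ 1`. -/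
def hPoly (q : ℂ) : ℕ → Polynomial ℂ
  | 0 => 1
  | 1 => 2 * Polynomial.X
  | n + 2 =>
      2 * Polynomial.X * hPoly q (n + 1) - Polynomial.C (1 - q ^ (n + 1)) * hPoly q n

/-- The Al-Salam–Chihara polynomials `Q_n = p_n(x;a,b,0,0|q)`:
`Q_0 = 1`, `Q_1 = 2x - (a+b)`, and
`2x·Q_n = Q_{n+1} + q^n(a+b)Q_n + (1-q^n)(1-q^{n-1}ab)Q_{n-1}` for `n ≥ 1`. -/
def ascPoly (q a b : ℂ) : ℕ → Polynomial ℂ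
  | 0 => 1
  | 1 => 2 * Polynomial.X - Polynomial.C (a + b)
  | n + 2 =>
      (2 * Polynomial.X - Polynomial.C (q ^ (n + 1) * (a + b))) * ascPoly q a b (n + 1)
        - Polynomial.C ((1 - q ^ (n + 1)) * (1 - q ^ n * a * b)) * ascPoly q a b n

/-- The connection coefficients `c_{n,k} = Σ_{ℓ=k}^{n} binom_q(n,ℓ)·binom_q(ℓ,k)·a^{n-ℓ}·b^{ℓ-k}`. -/
def cCoef (q a b : ℂ) (n k : ℕ) : ℂ :=
  ∑ ℓ ∈ Finset.Icc k n, qBinom q n ℓ * qBinom q ℓ k * a ^ (n - ℓ) * b ^ (ℓ - k)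

/-!
Since `h_n = Q_n(x; 0, 0)` and `Q_n(x; a, b)` is symmetric in `a, b`, everything follows from the
expansion `Q_n(x; a, 0) = ∑_k [n, k]_q b^(n-k) Q_k(x; a, b)`. That expansion is proved by checking
that its right-hand side satisfies the three-term recurrence of `Q_n(x; a, 0)`: multiplication by
`2x` acts on coefficients in the basis `Q_k(x; a, b)` by the Jacobi matrix, and coefficientwise the
recurrence reduces to the `q`-Pascal rule plus the absorption and shift identities of Gaussian
binomials. Applying it twice, `(0, 0) → (0, a) = (a, 0) → (a, b)`, and exchanging the two sums gives
`c_{n,k}`.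
-/

open Polynomial Finset

section QBinom

variable (q : ℂ)

lemma qBinom_zero_right (n : ℕ) : qBinom q n 0 = 1 := by
  cases n <;> rfl

lemma qBinom_succ_succ (n k : ℕ) :
    qBinom q (n + 1) (k + 1) = q ^ (k + 1) * qBinom q n (k + 1) + qBinom q n k := rfl

lemma qBinom_eq_zero_of_lt {n k : ℕ} (h : n < k) : qBinom q n k = 0 := by
  induction n generalizing k with
  | zero => obtain ⟨k, rfl⟩ := Nat.exists_eq_add_one_of_ne_zero h.ne'; rfl
  | succ n ih =>
    obtain ⟨k, rfl⟩ := Nat.exists_eq_add_one_of_ne_zero (Nat.ne_zero_of_lt h)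
    rw [qBinom_succ_succ, ih (by omega), ih (by omega), mul_zero, add_zero]

/-- The absorption and shift identities are proved together, avoiding any division by
`q`-factorials: each one at `n + 1` needs both at `n`. -/
lemma qBinom_absorb_and_shift (n : ℕ) :
    (∀ k, (1 - q ^ (k + 1)) * qBinom q (n + 1) (k + 1) = (1 - q ^ (n + 1)) * qBinom q n k) ∧
    (∀ k, (q ^ k - q ^ n) * qBinom q n k = q ^ k * (1 - q ^ (k + 1)) * qBinom q n (k + 1)) := by
  induction n with
  | zero =>
    refine ⟨fun k => ?_, fun k => ?_⟩
    · cases k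
      · simp [qBinom]
      · rw [qBinom_eq_zero_of_lt q (by omega), qBinom_eq_zero_of_lt q (by omega)]; ring
    · cases k
      · simp [qBinom]
      · rw [qBinom_eq_zero_of_lt q (by omega), qBinom_eq_zero_of_lt q (by omega)]; ring
  | succ n ih =>
    obtain ⟨absorb, shift⟩ := ih
    refine ⟨fun k => ?_, fun k => ?_⟩
    · rcases k with _ | k
      · have h := absorb 0
        rw [qBinom_zero_right] at h ⊢
        rw [qBinom_succ_succ, qBinom_zero_right]
        linear_combination q * h
      · linear_combination (1 - q ^ (k + 2)) * qBinom_succ_succ q (n + 1) (k + 1)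
          + q ^ (k + 2) * absorb (k + 1) + (q ^ (n + 2) - q ^ (k + 2)) * qBinom_succ_succ q n k
          - q ^ 2 * shift k
    · rcases k with _ | k
      · have h := absorb 0
        rw [qBinom_zero_right] at h ⊢
        linear_combination -h
      · linear_combination (q ^ (k + 1) - q ^ (n + 1)) * qBinom_succ_succ q n k
          - q ^ (k + 1) * absorb (k + 1) + q * shift k

end QBinom

/-- The coefficient `[n, k]_q b^(n-k)` of `Q_k(a, b)` in `Q_n(a, 0)`; note the truncated
exponent, harmless because `[n, k]_q = 0` for `n < k`. -/
def qBinomTerm (q b : ℂ) (n k : ℕ) : ℂ := qBinom q n k * b ^ (n - k)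

section QBinomTerm

variable (q b : ℂ)

lemma qBinomTerm_eq_zero_of_lt {n k : ℕ} (h : n < k) : qBinomTerm q b n k = 0 := by
  rw [qBinomTerm, qBinom_eq_zero_of_lt q h, zero_mul]

lemma mul_qBinomTerm_succ_right (n k : ℕ) :
    b * qBinomTerm q b n (k + 1) = qBinom q n (k + 1) * b ^ (n - k) := by
  rcases lt_or_ge k n with h | h
  · rw [qBinomTerm, show n - k = n - (k + 1) + 1 by omega, pow_succ]
    ring
  · rw [qBinomTerm_eq_zero_of_lt q b (by omega), qBinom_eq_zero_of_lt q (by omega)]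
    ring

lemma qBinomTerm_succ (n k : ℕ) :
    qBinomTerm q b (n + 1) k =
      (if k = 0 then 0 else qBinomTerm q b n (k - 1)) + q ^ k * b * qBinomTerm q b n k := by
  rcases k with _ | k
  · simp only [qBinomTerm, qBinom_zero_right, if_true, Nat.sub_zero, pow_succ]
    ring
  · rw [if_neg k.succ_ne_zero, Nat.add_sub_cancel, qBinomTerm, qBinom_succ_succ,
      Nat.add_sub_add_right, qBinomTerm, mul_assoc _ b, mul_qBinomTerm_succ_right]
    ring

lemma qBinomTerm_absorb (n k : ℕ) :
    (1 - q ^ (k + 1)) * qBinomTerm q b (n + 1) (k + 1) =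
      (1 - q ^ (n + 1)) * qBinomTerm q b n k := by
  rw [qBinomTerm, qBinomTerm, Nat.add_sub_add_right, ← mul_assoc,
    (qBinom_absorb_and_shift q n).1 k, mul_assoc]

lemma qBinomTerm_shift (n k : ℕ) :
    (q ^ k - q ^ n) * qBinomTerm q b n k =
      q ^ k * (1 - q ^ (k + 1)) * (b * qBinomTerm q b n (k + 1)) := by
  rw [mul_qBinomTerm_succ_right, qBinomTerm, ← mul_assoc, (qBinom_absorb_and_shift q n).2 k,
    mul_assoc]

lemma qBinomTerm_recurrence (a : ℂ) (n k : ℕ) :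
    qBinomTerm q b (n + 2) k =
      (if k = 0 then 0 else qBinomTerm q b (n + 1) (k - 1))
        + q ^ k * (a + b) * qBinomTerm q b (n + 1) k
        + (1 - q ^ (k + 1)) * (1 - q ^ k * a * b) * qBinomTerm q b (n + 1) (k + 1)
        - q ^ (n + 1) * a * qBinomTerm q b (n + 1) k - (1 - q ^ (n + 1)) * qBinomTerm q b n k := by
  linear_combination qBinomTerm_succ q b (n + 1) k - qBinomTerm_absorb q b n k
    - a * qBinomTerm_shift q b (n + 1) k

end QBinomTerm

section ASC

variable (q a b : ℂ)

lemma eq_ascPoly_of_recurrence {f : ℕ → ℂ[X]} (h0 : f 0 = 1) (h1 : f 1 = 2 * X - C (a + b))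
    (h : ∀ n, f (n + 2) = (2 * X - C (q ^ (n + 1) * (a + b))) * f (n + 1)
      - C ((1 - q ^ (n + 1)) * (1 - q ^ n * a * b)) * f n) (n : ℕ) :
    f n = ascPoly q a b n := by
  induction n using Nat.twoStepInduction with
  | zero => exact h0
  | one => exact h1
  | more n ih ih' => rw [h, ih, ih', ascPoly]

lemma ascPoly_comm (n : ℕ) : ascPoly q b a n = ascPoly q a b n := by
  refine eq_ascPoly_of_recurrence q a b (by rw [ascPoly]) (by rw [ascPoly, add_comm])
    (fun n => ?_) n
  rw [ascPoly, add_comm b a, mul_right_comm _ b a]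

lemma hPoly_eq_ascPoly_zero_zero (n : ℕ) : hPoly q n = ascPoly q 0 0 n := by
  refine eq_ascPoly_of_recurrence q 0 0 (by rw [hPoly]) (by simp [hPoly]) (fun n => ?_) n
  simp [hPoly]

/-- At `k = 0` the last term vanishes through the factor `1 - q ^ 0`, so the truncated `k - 1`
is harmless. -/
lemma two_X_mul_ascPoly (k : ℕ) :
    2 * X * ascPoly q a b k = ascPoly q a b (k + 1) + C (q ^ k * (a + b)) * ascPoly q a b k
      + C ((1 - q ^ k) * (1 - q ^ (k - 1) * a * b)) * ascPoly q a b (k - 1) := by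
  rcases k with _ | k
  · simp [ascPoly]
  · rw [ascPoly, Nat.add_sub_cancel]
    ring

lemma two_X_mul_sum_ascPoly (c : ℕ → ℂ) (N : ℕ) (hc : ∀ k, N ≤ k → c k = 0) :
    2 * X * ∑ k ∈ range (N + 1), C (c k) * ascPoly q a b k =
      ∑ k ∈ range (N + 1), C ((if k = 0 then 0 else c (k - 1)) + q ^ k * (a + b) * c k
        + (1 - q ^ (k + 1)) * (1 - q ^ k * a * b) * c (k + 1)) * ascPoly q a b k := by
  have raise : ∑ k ∈ range (N + 1), C (c k) * ascPoly q a b (k + 1) =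
      ∑ k ∈ range (N + 1), C (if k = 0 then 0 else c (k - 1)) * ascPoly q a b k := by
    rw [sum_range_succ, hc N le_rfl, sum_range_succ' _ N]
    simp
  have lower : ∑ k ∈ range (N + 1),
        C (c k * ((1 - q ^ k) * (1 - q ^ (k - 1) * a * b))) * ascPoly q a b (k - 1) =
      ∑ k ∈ range (N + 1), C ((1 - q ^ (k + 1)) * (1 - q ^ k * a * b) * c (k + 1))
        * ascPoly q a b k := by
    rw [sum_range_succ' _ N, sum_range_succ _ N, hc (N + 1) (by omega)]
    simp [mul_comm]
  calc 2 * X * ∑ k ∈ range (N + 1), C (c k) * ascPoly q a b k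
      = ∑ k ∈ range (N + 1), (C (c k) * ascPoly q a b (k + 1)
          + C (q ^ k * (a + b) * c k) * ascPoly q a b k
          + C (c k * ((1 - q ^ k) * (1 - q ^ (k - 1) * a * b))) * ascPoly q a b (k - 1)) := by
        rw [mul_sum]
        refine sum_congr rfl fun k _ => ?_
        rw [mul_left_comm, two_X_mul_ascPoly]
        simp only [map_mul]
        ring
    _ = _ := by
        rw [sum_add_distrib, sum_add_distrib, raise, lower, ← sum_add_distrib, ← sum_add_distrib]
        refine sum_congr rfl fun k _ => ?_
        simp only [map_add]
        ring

lemma ascPoly_zero_right_eq_sum (n : ℕ) :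
    ascPoly q a 0 n = ∑ k ∈ range (n + 1), C (qBinomTerm q b n k) * ascPoly q a b k := by
  have extend : ∀ m N, m + 1 ≤ N → ∑ k ∈ range N, C (qBinomTerm q b m k) * ascPoly q a b k =
      ∑ k ∈ range (m + 1), C (qBinomTerm q b m k) * ascPoly q a b k := fun m N h =>
    (sum_subset (range_subset_range.mpr h) fun k _ hk => by
      rw [qBinomTerm_eq_zero_of_lt q b (by simpa using hk), C_0, zero_mul]).symm
  refine (eq_ascPoly_of_recurrence q a 0
    (f := fun n => ∑ k ∈ range (n + 1), C (qBinomTerm q b n k) * ascPoly q a b k)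
    ?_ ?_ (fun n => ?_) n).symm
  · simp [qBinomTerm, qBinom_zero_right, ascPoly]
  · simp [sum_range_succ, qBinomTerm, qBinom, ascPoly]
    ring
  · rw [← extend (n + 1) (n + 3) (by omega), ← extend n (n + 3) (by omega), sub_mul,
      two_X_mul_sum_ascPoly q a b _ (n + 2) fun k hk => qBinomTerm_eq_zero_of_lt q b (by omega),
      mul_sum, mul_sum, ← sum_sub_distrib, ← sum_sub_distrib]
    refine sum_congr rfl fun k _ => ?_
    rw [← mul_assoc, ← mul_assoc, ← map_mul, ← map_mul, ← sub_mul, ← sub_mul, ← map_sub,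
      ← map_sub, qBinomTerm_recurrence q b a]
    congr 2
    ring

end ASC

theorem stmt16_general (q : ℝ) (a b : ℂ) :
    ∀ n : ℕ,
      hPoly (q : ℂ) n =
        ∑ k ∈ Finset.range (n + 1),
          Polynomial.C (cCoef (q : ℂ) a b n k) * ascPoly (q : ℂ) a b k := by
  intro n
  have expand : ∀ ℓ, ascPoly q 0 a ℓ =
      ∑ k ∈ range (ℓ + 1), C (qBinomTerm q b ℓ k) * ascPoly q a b k := fun ℓ => by
    rw [ascPoly_comm, ascPoly_zero_right_eq_sum]
  calc hPoly q n
      = ∑ ℓ ∈ range (n + 1), ∑ k ∈ range (ℓ + 1),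
          C (qBinomTerm q a n ℓ * qBinomTerm q b ℓ k) * ascPoly q a b k := by
        rw [hPoly_eq_ascPoly_zero_zero, ascPoly_zero_right_eq_sum q 0 a]
        refine sum_congr rfl fun ℓ _ => ?_
        rw [expand, mul_sum]
        refine sum_congr rfl fun k _ => ?_
        rw [map_mul, mul_assoc]
    _ = ∑ k ∈ range (n + 1), ∑ ℓ ∈ Icc k n,
          C (qBinomTerm q a n ℓ * qBinomTerm q b ℓ k) * ascPoly q a b k :=
        sum_comm' fun ℓ k => by simp only [mem_range, mem_Icc]; omega
    _ = _ := by
        refine sum_congr rfl fun k _ => ?_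
        rw [cCoef, map_sum, sum_mul]
        refine sum_congr rfl fun ℓ _ => ?_
        rw [qBinomTerm, qBinomTerm]
        congr 2
        ring

theorem stmt16 (q : ℝ) (hq0 : 0 < q) (hq1 : q < 1) (a b : ℂ) :
    ∀ n : ℕ,
      hPoly (q : ℂ) n =
        ∑ k ∈ Finset.range (n + 1),
          Polynomial.C (cCoef (q : ℂ) a b n k) * ascPoly (q : ℂ) a b k :=
  stmt16_general q a b

end
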